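/- Let 𝒴 ⊂ ℝ be a finite set, let 𝒜, 𝒢₁, 𝒢₂, ℬ₂ be finite types, let p be a strictly positive probability mass function on 𝒴 × 𝒜 × 𝒢₁ × 𝒢₂ × ℬ₂, and fix a ∈ 𝒜. If G₂ ⊥ (A, G₁) | B₂ under p, then for every g₁: ∑_{(y,a′,g₂,b₂)} p(y,a′,g₂,b₂ | g₁) · ( ψ_a^{G₁,B₂}(y,a′,g₁,b₂) − ψ_a^{G₁,(G₂,B₂)}(y,a′,g₁,g₂,b₂) ) = 0; that is, the difference of the two influence functions has vanishing conditional expectation given G₁. -/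

import Mathlib

open Finset

noncomputable section

variable {Y : Finset ℝ} {A G₁ G₂ B₂ : Type}
variable [Fintype A] [Fintype G₁] [Fintype G₂] [Fintype B₂] [DecidableEq A]

/-- Marginal `p(g₁)`. -/
def pG1 (p : Y × A × G₁ × G₂ × B₂ → ℝ) (g₁ : G₁) : ℝ :=
  ∑ y : Y, ∑ a : A, ∑ g₂ : G₂, ∑ b₂ : B₂, p (y, a, g₁, g₂, b₂)

/-- Marginal `p(g₂)`. -/
def pG2 (p : Y × A × G₁ × G₂ × B₂ → ℝ) (g₂ : G₂) : ℝ :=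
  ∑ y : Y, ∑ a : A, ∑ g₁ : G₁, ∑ b₂ : B₂, p (y, a, g₁, g₂, b₂)

/-- Marginal `p(b₂)`. -/
def pB2 (p : Y × A × G₁ × G₂ × B₂ → ℝ) (b₂ : B₂) : ℝ :=
  ∑ y : Y, ∑ a : A, ∑ g₁ : G₁, ∑ g₂ : G₂, p (y, a, g₁, g₂, b₂)

/-- Marginal `p(g₂, b₂)`. -/
def pG2B2 (p : Y × A × G₁ × G₂ × B₂ → ℝ) (g₂ : G₂) (b₂ : B₂) : ℝ :=
  ∑ y : Y, ∑ a : A, ∑ g₁ : G₁, p (y, a, g₁, g₂, b₂)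

/-- Marginal `p(a, g₁, b₂)`. -/
def pAG1B2 (p : Y × A × G₁ × G₂ × B₂ → ℝ) (a : A) (g₁ : G₁) (b₂ : B₂) : ℝ :=
  ∑ y : Y, ∑ g₂ : G₂, p (y, a, g₁, g₂, b₂)

/-- Marginal `p(a, g₁, g₂, b₂)`. -/
def pAG1G2B2 (p : Y × A × G₁ × G₂ × B₂ → ℝ) (a : A) (g₁ : G₁) (g₂ : G₂) (b₂ : B₂) : ℝ :=
  ∑ y : Y, p (y, a, g₁, g₂, b₂)

/-- Marginal `p(a, g₁, g₂)`. -/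
def pAG1G2 (p : Y × A × G₁ × G₂ × B₂ → ℝ) (a : A) (g₁ : G₁) (g₂ : G₂) : ℝ :=
  ∑ y : Y, ∑ b₂ : B₂, p (y, a, g₁, g₂, b₂)

/-- Outcome regression `m₁(g₁,b₂) = ∑_y y·p(y | a, g₁, b₂)` for the
adjustment set `(G₁, B₂)`. -/
def m1 (p : Y × A × G₁ × G₂ × B₂ → ℝ) (a : A) (g₁ : G₁) (b₂ : B₂) : ℝ :=
  ∑ y : Y, (y : ℝ) * ((∑ g₂ : G₂, p (y, a, g₁, g₂, b₂)) / pAG1B2 p a g₁ b₂)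

/-- Outcome regression `m₂(g₁,g₂,b₂) = ∑_y y·p(y | a, g₁, g₂, b₂)` for the
adjustment set `(G₁, (G₂, B₂))`. -/
def m2 (p : Y × A × G₁ × G₂ × B₂ → ℝ) (a : A) (g₁ : G₁) (g₂ : G₂) (b₂ : B₂) : ℝ :=
  ∑ y : Y, (y : ℝ) * (p (y, a, g₁, g₂, b₂) / pAG1G2B2 p a g₁ g₂ b₂)

/-- Outcome regression `m₃(g₁,g₂) = ∑_y y·p(y | a, g₁, g₂)` for the
adjustment set `(G₁, G₂)`. -/
def m3 (p : Y × A × G₁ × G₂ × B₂ → ℝ) (a : A) (g₁ : G₁) (g₂ : G₂) : ℝ :=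
  ∑ y : Y, (y : ℝ) * ((∑ b₂ : B₂, p (y, a, g₁, g₂, b₂)) / pAG1G2 p a g₁ g₂)

/-- Target parameter for the adjustment set `(G₁, B₂)`. -/
def T1 (p : Y × A × G₁ × G₂ × B₂ → ℝ) (a : A) : ℝ :=
  ∑ g₁ : G₁, pG1 p g₁ * ∑ b₂ : B₂, pB2 p b₂ * m1 p a g₁ b₂

/-- Target parameter for the adjustment set `(G₁, (G₂, B₂))`. -/
def T2 (p : Y × A × G₁ × G₂ × B₂ → ℝ) (a : A) : ℝ :=
  ∑ g₁ : G₁, pG1 p g₁ * ∑ g₂ : G₂, ∑ b₂ : B₂, pG2B2 p g₂ b₂ * m2 p a g₁ g₂ b₂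

/-- Target parameter for the adjustment set `(G₁, G₂)`. -/
def T3 (p : Y × A × G₁ × G₂ × B₂ → ℝ) (a : A) : ℝ :=
  ∑ g₁ : G₁, pG1 p g₁ * ∑ g₂ : G₂, pG2 p g₂ * m3 p a g₁ g₂

/-- Influence function `ψ_a^{G₁,B₂}` for the adjustment set `(G₁, B₂)`. -/
def psi1 (p : Y × A × G₁ × G₂ × B₂ → ℝ) (a : A)
    (y : Y) (a' : A) (g₁ : G₁) (b₂ : B₂) : ℝ :=
  (if a' = a then (1 : ℝ) else 0) * (pG1 p g₁ * pB2 p b₂ / pAG1B2 p a g₁ b₂) *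
      ((y : ℝ) - m1 p a g₁ b₂)
    + (∑ b₂' : B₂, pB2 p b₂' * m1 p a g₁ b₂')
    + (∑ g₁' : G₁, pG1 p g₁' * m1 p a g₁' b₂)
    - 2 * T1 p a

/-- Influence function `ψ_a^{G₁,(G₂,B₂)}` for the adjustment set `(G₁, (G₂, B₂))`. -/
def psi2 (p : Y × A × G₁ × G₂ × B₂ → ℝ) (a : A)
    (y : Y) (a' : A) (g₁ : G₁) (g₂ : G₂) (b₂ : B₂) : ℝ :=
  (if a' = a then (1 : ℝ) else 0) *
      (pG1 p g₁ * pG2B2 p g₂ b₂ / pAG1G2B2 p a g₁ g₂ b₂) *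
      ((y : ℝ) - m2 p a g₁ g₂ b₂)
    + (∑ g₂' : G₂, ∑ b₂' : B₂, pG2B2 p g₂' b₂' * m2 p a g₁ g₂' b₂')
    + (∑ g₁' : G₁, pG1 p g₁' * m2 p a g₁' g₂ b₂)
    - 2 * T2 p a

/-- Influence function `ψ_a^{G₁,G₂}` for the adjustment set `(G₁, G₂)`. -/
def psi3 (p : Y × A × G₁ × G₂ × B₂ → ℝ) (a : A)
    (y : Y) (a' : A) (g₁ : G₁) (g₂ : G₂) : ℝ :=
  (if a' = a then (1 : ℝ) else 0) * (pG1 p g₁ * pG2 p g₂ / pAG1G2 p a g₁ g₂) *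
      ((y : ℝ) - m3 p a g₁ g₂)
    + (∑ g₂' : G₂, pG2 p g₂' * m3 p a g₁ g₂')
    + (∑ g₁' : G₁, pG1 p g₁' * m3 p a g₁' g₂)
    - 2 * T3 p a

/-- Conditional independence `G₂ ⊥ (A, G₁) | B₂` under `p`. -/
def CI_G2_AG1_B2 (p : Y × A × G₁ × G₂ × B₂ → ℝ) : Prop :=
  ∀ (g₂ : G₂) (a : A) (g₁ : G₁) (b₂ : B₂),
    (∑ y : Y, p (y, a, g₁, g₂, b₂)) / pB2 p b₂ =
      (pG2B2 p g₂ b₂ / pB2 p b₂) * (pAG1B2 p a g₁ b₂ / pB2 p b₂)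

/-- Conditional independence `Y ⊥ B₂ | (A, G₁, G₂)` under `p`. -/
def CI_Y_B2_AG1G2 (p : Y × A × G₁ × G₂ × B₂ → ℝ) : Prop :=
  ∀ (y : Y) (a : A) (g₁ : G₁) (g₂ : G₂) (b₂ : B₂),
    p (y, a, g₁, g₂, b₂) / pAG1G2 p a g₁ g₂ =
      ((∑ b₂' : B₂, p (y, a, g₁, g₂, b₂')) / pAG1G2 p a g₁ g₂) *
        (pAG1G2B2 p a g₁ g₂ b₂ / pAG1G2 p a g₁ g₂)

/-- Variance of a real function of the observation under `p`. -/
def VarP (p : Y × A × G₁ × G₂ × B₂ → ℝ) (f : Y × A × G₁ × G₂ × B₂ → ℝ) : ℝ :=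
  (∑ o : Y × A × G₁ × G₂ × B₂, p o * f o ^ 2) -
    (∑ o : Y × A × G₁ × G₂ × B₂, p o * f o) ^ 2

/-!
Under `G₂ ⊥ (A, G₁) | B₂` one has `p(a, g₁, g₂, b₂) p(b₂) = p(g₂, b₂) p(a, g₁, b₂)`, so averaging
the finer regression `m₂(g₁, g₂, b₂)` over `g₂`, with weights `p(g₂ | b₂)` or with weights
`p(g₂ | a', g₁, b₂)`, returns `m₁(g₁, b₂)`. Hence `ψ¹` and `ψ²` have the same target and the same
`b₂`-standardised term, and their `g₁'`-standardised terms have the same conditional expectation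
given `G₁`. What remains are the inverse-probability-weighted residuals `y - m`, which have
conditional mean zero given `G₁` because each `m` is a conditional mean of `Y`.
-/

set_option linter.unusedSectionVars false

theorem Finset.sum_mul_sub_weighted_mean {ι K : Type*} [Field K] (s : Finset ι) (w f : ι → K)
    (hw : ∑ i ∈ s, w i ≠ 0) :
    ∑ i ∈ s, w i * (f i - ∑ j ∈ s, f j * (w j / ∑ k ∈ s, w k)) = 0 := by
  simp only [mul_sub, sum_sub_distrib, ← sum_mul, mul_div_assoc']
  rw [← sum_div, mul_div_cancel₀ _ hw]
  simp only [mul_comm, sub_self]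

section Marginals

variable (p : Y × A × G₁ × G₂ × B₂ → ℝ)

theorem pB2_pos [Nonempty Y] [Nonempty A] [Nonempty G₁] [Nonempty G₂]
    (hpos : ∀ o, 0 < p o) (b₂ : B₂) : 0 < pB2 p b₂ :=
  sum_pos (fun _ _ => sum_pos (fun _ _ => sum_pos (fun _ _ => sum_pos
    (fun _ _ => hpos _) univ_nonempty) univ_nonempty) univ_nonempty) univ_nonempty

theorem pAG1B2_pos [Nonempty Y] [Nonempty G₂]
    (hpos : ∀ o, 0 < p o) (a : A) (g₁ : G₁) (b₂ : B₂) : 0 < pAG1B2 p a g₁ b₂ :=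
  sum_pos (fun _ _ => sum_pos (fun _ _ => hpos _) univ_nonempty) univ_nonempty

theorem pAG1G2B2_pos [Nonempty Y]
    (hpos : ∀ o, 0 < p o) (a : A) (g₁ : G₁) (g₂ : G₂) (b₂ : B₂) :
    0 < pAG1G2B2 p a g₁ g₂ b₂ :=
  sum_pos (fun _ _ => hpos _) univ_nonempty

theorem sum_pAG1G2B2 (a : A) (g₁ : G₁) (b₂ : B₂) :
    ∑ g₂ : G₂, pAG1G2B2 p a g₁ g₂ b₂ = pAG1B2 p a g₁ b₂ :=
  sum_comm

theorem sum_p_mul_eq_sum_pAG1G2B2_mul (g₁ : G₁) (F : G₂ → B₂ → ℝ) :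
    ∑ y : Y, ∑ a' : A, ∑ g₂ : G₂, ∑ b₂ : B₂, p (y, a', g₁, g₂, b₂) * F g₂ b₂ =
      ∑ a' : A, ∑ g₂ : G₂, ∑ b₂ : B₂, pAG1G2B2 p a' g₁ g₂ b₂ * F g₂ b₂ := by
  rw [sum_comm]
  refine sum_congr rfl fun a' _ => ?_
  simp only [pAG1G2B2, sum_mul]
  rw [sum_comm]
  exact sum_congr rfl fun g₂ _ => sum_comm

theorem pAG1G2B2_mul_pB2_of_CI (hCI : CI_G2_AG1_B2 p) {b₂ : B₂} (hb₂ : pB2 p b₂ ≠ 0)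
    (a : A) (g₁ : G₁) (g₂ : G₂) :
    pAG1G2B2 p a g₁ g₂ b₂ * pB2 p b₂ = pG2B2 p g₂ b₂ * pAG1B2 p a g₁ b₂ := by
  have h := hCI g₂ a g₁ b₂
  field_simp at h
  exact h

end Marginals

section Residuals

variable (p : Y × A × G₁ × G₂ × B₂ → ℝ)

def weightedResidual1 (a : A) (y : Y) (a' : A) (g₁ : G₁) (b₂ : B₂) : ℝ :=
  (if a' = a then (1 : ℝ) else 0) * (pG1 p g₁ * pB2 p b₂ / pAG1B2 p a g₁ b₂) *
    ((y : ℝ) - m1 p a g₁ b₂)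

def weightedResidual2 (a : A) (y : Y) (a' : A) (g₁ : G₁) (g₂ : G₂) (b₂ : B₂) : ℝ :=
  (if a' = a then (1 : ℝ) else 0) *
    (pG1 p g₁ * pG2B2 p g₂ b₂ / pAG1G2B2 p a g₁ g₂ b₂) * ((y : ℝ) - m2 p a g₁ g₂ b₂)

theorem sum_p_mul_weightedResidual1 [Nonempty Y] [Nonempty G₂] (hpos : ∀ o, 0 < p o)
    (a : A) (g₁ : G₁) :
    ∑ y : Y, ∑ a' : A, ∑ g₂ : G₂, ∑ b₂ : B₂,
      p (y, a', g₁, g₂, b₂) * weightedResidual1 p a y a' g₁ b₂ = 0 := by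
  simp only [weightedResidual1, ite_mul, one_mul, zero_mul, mul_ite, mul_zero, sum_ite_irrel,
    sum_const_zero, sum_ite_eq', mem_univ, if_true]
  rw [sum_congr rfl fun y _ => sum_comm, sum_comm]
  refine sum_eq_zero fun b₂ _ => ?_
  simp only [← sum_mul, mul_left_comm _ (pG1 p g₁ * pB2 p b₂ / pAG1B2 p a g₁ b₂), ← mul_sum]
  exact mul_eq_zero_of_right _ <| sum_mul_sub_weighted_mean _ _ _
    (pAG1B2_pos p hpos a g₁ b₂).ne'

theorem sum_p_mul_weightedResidual2 [Nonempty Y] (hpos : ∀ o, 0 < p o) (a : A) (g₁ : G₁) :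
    ∑ y : Y, ∑ a' : A, ∑ g₂ : G₂, ∑ b₂ : B₂,
      p (y, a', g₁, g₂, b₂) * weightedResidual2 p a y a' g₁ g₂ b₂ = 0 := by
  simp only [weightedResidual2, ite_mul, one_mul, zero_mul, mul_ite, mul_zero, sum_ite_irrel,
    sum_const_zero, sum_ite_eq', mem_univ, if_true]
  rw [sum_comm]
  refine sum_eq_zero fun g₂ _ => ?_
  rw [sum_comm]
  refine sum_eq_zero fun b₂ _ => ?_
  simp only [mul_left_comm _ (pG1 p g₁ * pG2B2 p g₂ b₂ / pAG1G2B2 p a g₁ g₂ b₂), ← mul_sum]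
  exact mul_eq_zero_of_right _ <| sum_mul_sub_weighted_mean _ _ _
    (pAG1G2B2_pos p hpos a g₁ g₂ b₂).ne'

end Residuals

section Regressions

variable (p : Y × A × G₁ × G₂ × B₂ → ℝ) (hpos : ∀ o, 0 < p o) (hCI : CI_G2_AG1_B2 p)
variable [Nonempty Y] [Nonempty A] [Nonempty G₁] [Nonempty G₂]
include hpos hCI

-- Under the independence, `p(g₂, b₂) / p(a, g₁, g₂, b₂) = p(b₂) / p(a, g₁, b₂)`.
theorem sum_pG2B2_mul_m2_of_CI (a : A) (g₁ : G₁) (b₂ : B₂) :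
    ∑ g₂ : G₂, pG2B2 p g₂ b₂ * m2 p a g₁ g₂ b₂ = pB2 p b₂ * m1 p a g₁ b₂ := by
  have hB := (pB2_pos p hpos b₂).ne'
  have hAG1B2 := (pAG1B2_pos p hpos a g₁ b₂).ne'
  calc ∑ g₂ : G₂, pG2B2 p g₂ b₂ * m2 p a g₁ g₂ b₂
      = ∑ g₂ : G₂, ∑ y : Y, (y : ℝ) * p (y, a, g₁, g₂, b₂) * (pB2 p b₂ / pAG1B2 p a g₁ b₂) := by
        refine sum_congr rfl fun g₂ _ => ?_
        rw [m2, mul_sum]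
        refine sum_congr rfl fun y _ => ?_
        have hAG1G2B2 := (pAG1G2B2_pos p hpos a g₁ g₂ b₂).ne'
        field_simp
        linear_combination (-((y : ℝ) * p (y, a, g₁, g₂, b₂))) *
          pAG1G2B2_mul_pB2_of_CI p hCI hB a g₁ g₂
    _ = pB2 p b₂ * m1 p a g₁ b₂ := by
        rw [m1, sum_comm, mul_sum]
        refine sum_congr rfl fun y _ => ?_
        rw [← sum_mul, ← mul_sum]
        ring

theorem sum_pAG1G2B2_mul_m2_of_CI (a a' : A) (g₁ g₁' : G₁) (b₂ : B₂) :
    ∑ g₂ : G₂, pAG1G2B2 p a' g₁ g₂ b₂ * m2 p a g₁' g₂ b₂ =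
      pAG1B2 p a' g₁ b₂ * m1 p a g₁' b₂ := by
  have hB := (pB2_pos p hpos b₂).ne'
  apply mul_right_cancel₀ hB
  calc (∑ g₂ : G₂, pAG1G2B2 p a' g₁ g₂ b₂ * m2 p a g₁' g₂ b₂) * pB2 p b₂
      = pAG1B2 p a' g₁ b₂ * ∑ g₂ : G₂, pG2B2 p g₂ b₂ * m2 p a g₁' g₂ b₂ := by
        rw [sum_mul, mul_sum]
        refine sum_congr rfl fun g₂ _ => ?_
        linear_combination m2 p a g₁' g₂ b₂ * pAG1G2B2_mul_pB2_of_CI p hCI hB a' g₁ g₂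
    _ = pAG1B2 p a' g₁ b₂ * m1 p a g₁' b₂ * pB2 p b₂ := by
        rw [sum_pG2B2_mul_m2_of_CI p hpos hCI]
        ring

theorem sum_pB2_mul_m1_of_CI (a : A) (g₁ : G₁) :
    ∑ b₂ : B₂, pB2 p b₂ * m1 p a g₁ b₂ =
      ∑ g₂ : G₂, ∑ b₂ : B₂, pG2B2 p g₂ b₂ * m2 p a g₁ g₂ b₂ := by
  rw [sum_comm]
  simp only [sum_pG2B2_mul_m2_of_CI p hpos hCI]

theorem T1_eq_T2_of_CI (a : A) : T1 p a = T2 p a := by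
  simp only [T1, T2, sum_pB2_mul_m1_of_CI p hpos hCI]

theorem sum_p_mul_sum_pG1_mul_m2_of_CI (a : A) (g₁ : G₁) :
    ∑ y : Y, ∑ a' : A, ∑ g₂ : G₂, ∑ b₂ : B₂,
        p (y, a', g₁, g₂, b₂) * ∑ g₁' : G₁, pG1 p g₁' * m2 p a g₁' g₂ b₂ =
      ∑ y : Y, ∑ a' : A, ∑ g₂ : G₂, ∑ b₂ : B₂,
        p (y, a', g₁, g₂, b₂) * ∑ g₁' : G₁, pG1 p g₁' * m1 p a g₁' b₂ := by
  rw [sum_p_mul_eq_sum_pAG1G2B2_mul p g₁ fun g₂ b₂ => ∑ g₁' : G₁, pG1 p g₁' * m2 p a g₁' g₂ b₂,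
    sum_p_mul_eq_sum_pAG1G2B2_mul p g₁ fun _ b₂ => ∑ g₁' : G₁, pG1 p g₁' * m1 p a g₁' b₂]
  refine sum_congr rfl fun a' _ => ?_
  calc ∑ g₂ : G₂, ∑ b₂ : B₂, pAG1G2B2 p a' g₁ g₂ b₂ * ∑ g₁' : G₁, pG1 p g₁' * m2 p a g₁' g₂ b₂
      = ∑ b₂ : B₂, ∑ g₁' : G₁,
          pG1 p g₁' * ∑ g₂ : G₂, pAG1G2B2 p a' g₁ g₂ b₂ * m2 p a g₁' g₂ b₂ := by
        rw [sum_comm]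
        refine sum_congr rfl fun b₂ _ => ?_
        simp only [mul_sum]
        rw [sum_comm]
        exact sum_congr rfl fun _ _ => sum_congr rfl fun _ _ => by ring
    _ = ∑ b₂ : B₂, ∑ g₁' : G₁, pG1 p g₁' * (pAG1B2 p a' g₁ b₂ * m1 p a g₁' b₂) := by
        simp only [sum_pAG1G2B2_mul_m2_of_CI p hpos hCI]
    _ = ∑ g₂ : G₂, ∑ b₂ : B₂, pAG1G2B2 p a' g₁ g₂ b₂ * ∑ g₁' : G₁, pG1 p g₁' * m1 p a g₁' b₂ := by
        rw [sum_comm (s := univ (α := G₂))]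
        refine sum_congr rfl fun b₂ _ => ?_
        rw [← sum_mul, sum_pAG1G2B2, mul_sum]
        exact sum_congr rfl fun _ _ => by ring

theorem psi1_sub_psi2_of_CI (a : A) (y : Y) (a' : A) (g₁ : G₁) (g₂ : G₂) (b₂ : B₂) :
    psi1 p a y a' g₁ b₂ - psi2 p a y a' g₁ g₂ b₂ =
      weightedResidual1 p a y a' g₁ b₂ - weightedResidual2 p a y a' g₁ g₂ b₂ +
        (∑ g₁' : G₁, pG1 p g₁' * m1 p a g₁' b₂ - ∑ g₁' : G₁, pG1 p g₁' * m2 p a g₁' g₂ b₂) := by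
  rw [psi1, psi2, sum_pB2_mul_m1_of_CI p hpos hCI, T1_eq_T2_of_CI p hpos hCI, weightedResidual1,
    weightedResidual2]
  ring

end Regressions

theorem psi_difference_condExp_G1_general
    (p : Y × A × G₁ × G₂ × B₂ → ℝ)
    (hpos : ∀ o, 0 < p o) (a : A)
    (hCI : CI_G2_AG1_B2 p) :
    ∀ g₁ : G₁,
      ∑ y : Y, ∑ a' : A, ∑ g₂ : G₂, ∑ b₂ : B₂,
        (p (y, a', g₁, g₂, b₂) / pG1 p g₁) *
          (psi1 p a y a' g₁ b₂ - psi2 p a y a' g₁ g₂ b₂) = 0 := by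
  intro g₁
  rcases isEmpty_or_nonempty Y with hY | hY
  · simp
  rcases isEmpty_or_nonempty G₂ with hG₂ | hG₂
  · simp
  have : Nonempty A := ⟨a⟩
  have : Nonempty G₁ := ⟨g₁⟩
  simp only [div_mul_eq_mul_div, ← sum_div, psi1_sub_psi2_of_CI p hpos hCI, mul_add, mul_sub,
    sum_add_distrib, sum_sub_distrib, sum_p_mul_weightedResidual1 p hpos,
    sum_p_mul_weightedResidual2 p hpos, sum_p_mul_sum_pG1_mul_m2_of_CI p hpos hCI]
  simp only [sub_self, add_zero, zero_div]

/-- Second orthogonality condition in the proof of Lemma 4.1: given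
`G₂ ⊥ (A, G₁) | B₂`, the difference of the two influence functions has
vanishing conditional expectation given `G₁`. -/
theorem psi_difference_condExp_G1
    (p : Y × A × G₁ × G₂ × B₂ → ℝ)
    (hpos : ∀ o, 0 < p o) (hsum : ∑ o, p o = 1) (a : A)
    (hCI : CI_G2_AG1_B2 p) :
    ∀ g₁ : G₁,
      ∑ y : Y, ∑ a' : A, ∑ g₂ : G₂, ∑ b₂ : B₂,
        (p (y, a', g₁, g₂, b₂) / pG1 p g₁) *
          (psi1 p a y a' g₁ b₂ - psi2 p a y a' g₁ g₂ b₂) = 0 :=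
  psi_difference_condExp_G1_general p hpos a hCI

end
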